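/- Let G be an s-parallel-greedy graph on n vertices with average degree d ≥ s (s even). Then G contains at least n·(c·d/s)^{s/2} monotonic paths with exactly s/2 edges, for some absolute constant c > 0. -/

import Mathlib

open SimpleGraph

open SimpleGraph

/-- `M` witnesses that `G` is `s`-parallel-greedy. -/
def IsParallelGreedy {V : Type*} (G : SimpleGraph V) (s k : ℕ)
    (M : Fin k → SimpleGraph V) : Prop :=
  (∀ i, M i ≤ G) ∧
  (∀ e ∈ G.edgeSet, ∃ i, e ∈ (M i).edgeSet) ∧
  (Pairwise fun i j => Disjoint (M i).edgeSet (M j).edgeSet) ∧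
  (∀ i, ∀ v u w : V, (M i).Adj v u → (M i).Adj v w → u = w) ∧
  (∀ i : Fin k, ∀ u v : V, (M i).Adj u v →
    ∀ p : (⨆ j : {j : Fin k // j < i}, M j.1).Walk u v, s < p.length)

/-- A walk is monotonic (w.r.t. the matchings `M`) if its edges can be assigned
strictly increasing matching indices, each edge belonging to its assigned matching. -/
def IsMonotonic {V : Type*} {G : SimpleGraph V} {k : ℕ} (M : Fin k → SimpleGraph V)
    {u v : V} (p : G.Walk u v) : Prop :=
  ∃ l : List (Fin k), l.Chain' (· < ·) ∧
    List.Forall₂ (fun e i => e ∈ (M i).edgeSet) p.edges l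

/-!
Graham–Kleitman: run through the matchings in order, keeping at each vertex `v` the length,
capped at `t = s / 2`, of a longest monotonic walk ending at `v`. An edge of the current matching
raises the sum of these levels by two unless one of its endpoints completes a monotonic walk of
length `t`, which is then counted instead; as levels never exceed `t`, a subgraph with `h` edges
carries at least `2h - tn` monotonic walks of length `t`, and these are paths because `t ≤ s`
and `G` is `s`-parallel-greedy. For a `p`-random subgraph, where a fixed path survives with
probability `p ^ t`, this gives `2pm ≤ tn + p ^ t P` for the number `P` of monotonic paths, and
`p = 2tn / m` yields `P ≥ n (m / 2tn) ^ t`, which is the claim with `c = 1 / 2`.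
-/

open Finset

lemma List.Forall₂.exists_of_mem_left {α β : Type*} {R : α → β → Prop} {l₁ : List α}
    {l₂ : List β} (h : List.Forall₂ R l₁ l₂) {a : α} (ha : a ∈ l₁) : ∃ b ∈ l₂, R a b := by
  induction h with
  | nil => simp at ha
  | cons hr _ ih =>
    obtain rfl | ha := List.mem_cons.1 ha
    · exact ⟨_, List.mem_cons_self, hr⟩
    · obtain ⟨b, hb, hab⟩ := ih ha
      exact ⟨b, List.mem_cons_of_mem _ hb, hab⟩

lemma Function.Involutive.sum_le_sum {α M : Type*} [Fintype α] [AddCommMonoid M]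
    [LinearOrder M] [IsOrderedCancelAddMonoid M] {π : α → α} (hπ : Function.Involutive π)
    {f g : α → M} (h : ∀ a, f a + f (π a) ≤ g a + g (π a)) :
    ∑ a, f a ≤ ∑ a, g a := by
  have hsum := Finset.sum_le_sum fun a (_ : a ∈ univ) => h a
  rw [sum_add_distrib, sum_add_distrib,
    Fintype.sum_bijective π hπ.bijective (fun a => f (π a)) f fun _ => rfl,
    Fintype.sum_bijective π hπ.bijective (fun a => g (π a)) g fun _ => rfl] at hsum
  exact le_of_not_gt fun hlt => (add_lt_add hlt hlt).not_ge hsum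

section RandomSubset

variable {ι : Type*} (E : Finset ι) (p : ℝ)

/-- The probability that a `p`-random subset of `E` equals `H`. -/
def subsetWeight (H : Finset ι) : ℝ := p ^ #H * (1 - p) ^ (#E - #H)

variable {E p}

lemma subsetWeight_nonneg (hp₀ : 0 ≤ p) (hp₁ : p ≤ 1) (H : Finset ι) :
    0 ≤ subsetWeight E p H := by
  unfold subsetWeight
  have : 0 ≤ 1 - p := by linarith
  positivity

lemma sum_subsetWeight : ∑ H ∈ E.powerset, subsetWeight E p H = 1 := by
  simp [subsetWeight, sum_pow_mul_eq_add_pow]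

variable [DecidableEq ι]

lemma sum_subsetWeight_of_subset {S : Finset ι} (hS : S ⊆ E) :
    ∑ H ∈ E.powerset with S ⊆ H, subsetWeight E p H = p ^ #S := by
  rw [← Icc_eq_filter_powerset, Icc_eq_image_powerset hS, sum_image]
  · calc ∑ K ∈ (E \ S).powerset, subsetWeight E p (S ∪ K)
        = ∑ K ∈ (E \ S).powerset, p ^ #S * (p ^ #K * (1 - p) ^ (#(E \ S) - #K)) := by
          refine sum_congr rfl fun K hK => ?_
          have hdisj : Disjoint S K := disjoint_of_subset_right (mem_powerset.1 hK) disjoint_sdiff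
          rw [subsetWeight, card_union_of_disjoint hdisj, card_sdiff_of_subset hS, pow_add,
            Nat.sub_add_eq, mul_assoc]
      _ = p ^ #S := by rw [← mul_sum, sum_pow_mul_eq_add_pow]; simp
  · intro K hK L hL hKL
    have hK' := disjoint_of_subset_right (mem_powerset.1 hK) (disjoint_sdiff (s := S) (t := E))
    have hL' := disjoint_of_subset_right (mem_powerset.1 hL) (disjoint_sdiff (s := S) (t := E))
    simpa [union_sdiff_cancel_left hK', union_sdiff_cancel_left hL'] using
      congrArg (· \ S) hKL

lemma sum_subsetWeight_mul_card_filter_subset {α : Type*} {T : Finset α} {S : α → Finset ι}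
    (hS : ∀ x ∈ T, S x ⊆ E) :
    ∑ H ∈ E.powerset, subsetWeight E p H * #{x ∈ T | S x ⊆ H} = ∑ x ∈ T, p ^ #(S x) := by
  simp_rw [card_filter, Nat.cast_sum, mul_sum, Nat.cast_ite, Nat.cast_one, Nat.cast_zero,
    mul_ite, mul_one, mul_zero]
  rw [sum_comm]
  refine sum_congr rfl fun x hx => ?_
  rw [← sum_subsetWeight_of_subset (hS x hx), sum_filter]

lemma sum_subsetWeight_mul_card : ∑ H ∈ E.powerset, subsetWeight E p H * #H = p * #E := by
  have h := sum_subsetWeight_mul_card_filter_subset (E := E) (p := p) (T := E) (S := ({·}))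
    (fun x hx => singleton_subset_iff.2 hx)
  simp only [card_singleton, pow_one, sum_const, nsmul_eq_mul] at h
  rw [mul_comm, ← h]
  refine sum_congr rfl fun H hH => ?_
  simp only [singleton_subset_iff, filter_mem_eq_inter, inter_eq_right.2 (mem_powerset.1 hH)]

lemma mul_mul_card_le_of_forall_subset {α : Type*} {T : Finset α} {S : α → Finset ι} {t : ℕ}
    {c a : ℝ} (hS : ∀ x ∈ T, S x ⊆ E ∧ #(S x) = t)
    (h : ∀ H ⊆ E, c * #H ≤ a + #{x ∈ T | S x ⊆ H}) (hp₀ : 0 ≤ p) (hp₁ : p ≤ 1) :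
    c * p * #E ≤ a + p ^ t * #T :=
  calc c * p * #E = ∑ H ∈ E.powerset, subsetWeight E p H * (c * #H) := by
        rw [mul_assoc, ← sum_subsetWeight_mul_card, mul_sum]
        exact sum_congr rfl fun _ _ => by ring
    _ ≤ ∑ H ∈ E.powerset, subsetWeight E p H * (a + #{x ∈ T | S x ⊆ H}) :=
        sum_le_sum fun H hH => mul_le_mul_of_nonneg_left (h H (mem_powerset.1 hH))
          (subsetWeight_nonneg hp₀ hp₁ H)
    _ = a + p ^ t * #T := by
        simp_rw [mul_add, sum_add_distrib, ← sum_mul, sum_subsetWeight, one_mul,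
          sum_subsetWeight_mul_card_filter_subset fun x hx => (hS x hx).1]
        rw [sum_congr rfl fun x hx => by rw [(hS x hx).2], sum_const, nsmul_eq_mul, mul_comm]

end RandomSubset

lemma mul_div_pow_le_of_forall_two_mul_le {n m N : ℝ} {t : ℕ} (hn : 0 < n) (ht : 1 ≤ t)
    (hm : t * n ≤ m) (h : ∀ p : ℝ, 0 ≤ p → p ≤ 1 → 2 * p * m ≤ t * n + p ^ t * N) :
    n * (m / (2 * t * n)) ^ t ≤ N := by
  have ht' : (1 : ℝ) ≤ t := by exact_mod_cast ht
  have htn : n ≤ t * n := by nlinarith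
  have hm₀ : 0 < m := by linarith
  rcases le_or_gt m (2 * t * n) with hsmall | hlarge
  · have hN : n ≤ N := by linarith [one_pow (M := ℝ) t ▸ h 1 zero_le_one le_rfl]
    have hbase : (m / (2 * t * n)) ^ t ≤ 1 :=
      pow_le_one₀ (by positivity) ((div_le_one (by positivity)).2 hsmall)
    nlinarith
  · set p := 2 * t * n / m with hp
    have hp₀ : 0 < p := by positivity
    have hpm : 2 * p * m = 4 * t * n := by rw [hp]; field_simp; ring
    have hN : n ≤ p ^ t * N := by
      linarith [h p hp₀.le ((div_le_one hm₀).2 hlarge.le)]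
    rw [← one_div_div, div_pow, one_pow, ← hp, mul_one_div, div_le_iff₀ (by positivity)]
    linarith

namespace SimpleGraph

variable {V : Type*} (G : SimpleGraph V)

open scoped Classical in
/-- The neighbour of `v` when `G` is a matching, and `v` itself when `v` is isolated. -/
noncomputable def partner (v : V) : V :=
  if h : ∃ w, G.Adj v w then h.choose else v

variable {G}

lemma adj_partner {v : V} (hv : v ∈ G.support) : G.Adj v (G.partner v) := by
  rw [partner, dif_pos ((mem_support G).1 hv)]
  exact ((mem_support G).1 hv).choose_spec

lemma partner_of_notMem_support {v : V} (hv : v ∉ G.support) : G.partner v = v :=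
  dif_neg (mt (mem_support G).2 hv)

lemma partner_mem_support {v : V} (hv : v ∈ G.support) : G.partner v ∈ G.support :=
  ⟨v, (adj_partner hv).symm⟩

variable (hG : ∀ ⦃v u w : V⦄, G.Adj v u → G.Adj v w → u = w)
include hG

lemma partner_involutive : Function.Involutive G.partner := by
  intro v
  by_cases hv : v ∈ G.support
  · exact hG (adj_partner (partner_mem_support hv)) (adj_partner hv).symm
  · rw [partner_of_notMem_support hv, partner_of_notMem_support hv]

lemma card_support_eq_two_mul_card_edgeFinset [Fintype V] [DecidableRel G.Adj]
    [DecidablePred (· ∈ G.support)] :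
    #{v | v ∈ G.support} = 2 * #G.edgeFinset := by
  rw [← sum_degrees_eq_twice_card_edges, card_filter]
  refine Finset.sum_congr rfl fun v _ => ?_
  have hle : G.degree v ≤ 1 := Finset.card_le_one.2 fun u hu w hw =>
    hG ((mem_neighborFinset G v u).1 hu) ((mem_neighborFinset G v w).1 hw)
  split_ifs with hv
  · have := G.degree_pos_iff_exists_adj v |>.2 hv
    omega
  · exact ((G.degree_eq_zero_iff_notMem_support v).2 hv).symm

end SimpleGraph

section Monotonic

variable {V : Type*} {G : SimpleGraph V} {k : ℕ}

def IsMonotonicLabelling (N : Fin k → SimpleGraph V) {u v : V} (p : G.Walk u v)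
    (l : List (Fin k)) : Prop :=
  l.IsChain (· < ·) ∧ List.Forall₂ (fun e i => e ∈ (N i).edgeSet) p.edges l

lemma isMonotonic_iff_exists_labelling {N : Fin k → SimpleGraph V} {u v : V} {p : G.Walk u v} :
    IsMonotonic N p ↔ ∃ l, IsMonotonicLabelling N p l :=
  Iff.rfl

namespace IsMonotonicLabelling

variable {N M : Fin k → SimpleGraph V} {u v w : V} {p : G.Walk u v} {l : List (Fin k)}

lemma nil : IsMonotonicLabelling N (Walk.nil : G.Walk v v) [] :=
  ⟨List.isChain_nil, List.Forall₂.nil⟩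

lemma mono (hl : IsMonotonicLabelling N p l) (hNM : ∀ i, N i ≤ M i) :
    IsMonotonicLabelling M p l :=
  ⟨hl.1, hl.2.imp fun {_ i} he => edgeSet_mono (hNM i) he⟩

lemma concat (hl : IsMonotonicLabelling N p l) {a : Fin k} (hlt : ∀ b ∈ l, b < a)
    (h : G.Adj v w) (ha : (N a).Adj v w) : IsMonotonicLabelling N (p.concat h) (l ++ [a]) := by
  refine ⟨List.isChain_append.2 ⟨hl.1, List.isChain_singleton a, fun b hb c hc => ?_⟩, ?_⟩
  · obtain rfl : a = c := by simpa using hc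
    exact hlt b (List.mem_of_mem_getLast? hb)
  · rw [Walk.edges_concat, List.concat_eq_append]
    exact List.rel_append hl.2 (List.Forall₂.cons ha List.Forall₂.nil)

end IsMonotonicLabelling

namespace IsParallelGreedy

variable {s : ℕ} {M : Fin k → SimpleGraph V}

lemma lt_length (hPG : IsParallelGreedy G s k M) {a : Fin k} {u v : V} (huv : (M a).Adj u v)
    (p : G.Walk u v) (hp : ∀ e ∈ p.edges, ∃ b < a, e ∈ (M b).edgeSet) : s < p.length := by
  have hsub : ∀ e ∈ p.edges, e ∈ (⨆ j : {j : Fin k // j < a}, M j.1).edgeSet := by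
    intro e he
    obtain ⟨b, hb, heb⟩ := hp e he
    rw [edgeSet_iSup, Set.mem_iUnion]
    exact ⟨⟨b, hb⟩, heb⟩
  simpa using hPG.2.2.2.2 a u v huv (p.transfer _ hsub)

lemma isPath_of_antitone [DecidableEq V] (hPG : IsParallelGreedy G s k M) {u v : V}
    (p : G.Walk u v) {l : List (Fin k)} (hl : l.IsChain (· > ·))
    (hf : List.Forall₂ (fun e i => e ∈ (M i).edgeSet) p.edges l) (hlen : p.length ≤ s) :
    p.IsPath := by
  induction p generalizing l with
  | nil => exact Walk.IsPath.nil
  | @cons u w v huw q ih =>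
    rw [Walk.edges_cons] at hf
    obtain _ | ⟨hua, hf'⟩ := hf
    rename_i a l'
    rw [Walk.length_cons] at hlen
    refine (Walk.cons_isPath_iff huw q).2 ⟨ih hl.tail hf' (by omega), fun hu => ?_⟩
    have hlt : ∀ e ∈ (q.takeUntil u hu).reverse.edges, ∃ b < a, e ∈ (M b).edgeSet := by
      intro e he
      rw [Walk.edges_reverse, List.mem_reverse] at he
      obtain ⟨b, hb, heb⟩ := hf'.exists_of_mem_left (q.edges_takeUntil_subset_edges hu he)
      exact ⟨b, List.rel_of_pairwise_cons (List.isChain_iff_pairwise.1 hl) hb, heb⟩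
    have := hPG.lt_length ((M a).mem_edgeSet.1 hua) _ hlt
    have := q.length_takeUntil_le_length hu
    simp only [Walk.length_reverse] at *
    omega

lemma isPath_of_isMonotonic [DecidableEq V] (hPG : IsParallelGreedy G s k M) {u v : V}
    {p : G.Walk u v} (hp : IsMonotonic M p) (hlen : p.length ≤ s) : p.IsPath := by
  obtain ⟨l, hl, hf⟩ := hp
  rw [← Walk.isPath_reverse_iff]
  refine hPG.isPath_of_antitone p.reverse (l := l.reverse) (List.isChain_reverse.2 hl) ?_
    (by simpa using hlen)
  rw [Walk.edges_reverse]
  exact List.rel_reverse hf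

end IsParallelGreedy

end Monotonic

namespace GrahamKleitman

variable {V : Type*} {k : ℕ} (N : Fin k → SimpleGraph V)

def roundGraph (i : ℕ) : SimpleGraph V :=
  if h : i < k then N ⟨i, h⟩ else ⊥

open scoped Classical in
/-- When the graphs of `N` are matchings, `level N t i v = min t ℓ` where `ℓ` is the largest
length of a walk ending at `v` that is monotonic with respect to `N 0, …, N (i - 1)`. -/
noncomputable def level (t : ℕ) : ℕ → V → ℕ
  | 0, _ => 0
  | i + 1, v =>
    if v ∈ (roundGraph N i).support then
      min t (max (level t i v) (level t i ((roundGraph N i).partner v) + 1))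
    else level t i v

open scoped Classical in
/-- The vertices matched in round `i` to a vertex of level at least `t - 1`: each of them ends a
monotonic walk of length `t` whose last edge comes from round `i`. -/
noncomputable def frontier [Fintype V] (t i : ℕ) : Finset V :=
  {v | v ∈ (roundGraph N i).support ∧ t - 1 ≤ level N t i ((roundGraph N i).partner v)}

variable {N}

lemma roundGraph_of_lt {i : ℕ} (h : i < k) : roundGraph N i = N ⟨i, h⟩ :=
  dif_pos h

lemma lt_of_roundGraph_adj {i : ℕ} {u v : V} (h : (roundGraph N i).Adj u v) : i < k := by
  by_contra hik
  rw [roundGraph, dif_neg hik] at h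
  exact h

lemma roundGraph_le {G : SimpleGraph V} (hNG : ∀ i, N i ≤ G) (i : ℕ) : roundGraph N i ≤ G := by
  unfold roundGraph
  split_ifs
  exacts [hNG _, bot_le]

lemma roundGraph_eq_of_adj (hdisj : Pairwise fun i j => Disjoint (N i).edgeSet (N j).edgeSet)
    {i j : ℕ} {u v : V} (hi : (roundGraph N i).Adj u v) (hj : (roundGraph N j).Adj u v) :
    i = j := by
  have hik := lt_of_roundGraph_adj hi
  have hjk := lt_of_roundGraph_adj hj
  rw [roundGraph_of_lt hik] at hi
  rw [roundGraph_of_lt hjk] at hj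
  by_contra hij
  exact Set.disjoint_left.1 (hdisj (i := ⟨i, hik⟩) (j := ⟨j, hjk⟩) (by simpa using hij))
    ((mem_edgeSet _).2 hi) ((mem_edgeSet _).2 hj)

lemma roundGraph_adj_unique (hN : ∀ i, ∀ ⦃v u w : V⦄, (N i).Adj v u → (N i).Adj v w → u = w)
    (i : ℕ) ⦃v u w : V⦄ (hu : (roundGraph N i).Adj v u) (hw : (roundGraph N i).Adj v w) :
    u = w := by
  have hik := lt_of_roundGraph_adj hu
  rw [roundGraph_of_lt hik] at hu hw
  exact hN _ hu hw

lemma level_le (t i : ℕ) (v : V) : level N t i v ≤ t := by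
  induction i generalizing v with
  | zero => exact Nat.zero_le t
  | succ i ih =>
    rw [level]
    split_ifs
    exacts [min_le_left _ _, ih v]

lemma level_succ_of_mem {t i : ℕ} {v : V} (hv : v ∈ (roundGraph N i).support) :
    level N t (i + 1) v =
      min t (max (level N t i v) (level N t i ((roundGraph N i).partner v) + 1)) := by
  rw [level, if_pos hv]

lemma level_succ_of_notMem {t i : ℕ} {v : V} (hv : v ∉ (roundGraph N i).support) :
    level N t (i + 1) v = level N t i v := by
  rw [level, if_neg hv]

section Counting

variable [Fintype V] (hN : ∀ i, ∀ ⦃v u w : V⦄, (N i).Adj v u → (N i).Adj v w → u = w)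
include hN

open scoped Classical in
/-- Each edge of round `i` raises the total level by two, except that an endpoint whose partner
already has level `t - 1` may be capped; such endpoints are counted by the frontier. -/
lemma sum_level_add_card_support_le (t i : ℕ) :
    ∑ v, level N t i v + #{v | v ∈ (roundGraph N i).support} ≤
      ∑ v, level N t (i + 1) v + #(frontier N t i) := by
  have hR := roundGraph_adj_unique hN i
  rw [card_filter, frontier, card_filter, ← sum_add_distrib, ← sum_add_distrib]
  refine (SimpleGraph.partner_involutive hR).sum_le_sum fun v => ?_
  by_cases hv : v ∈ (roundGraph N i).support
  · have hw := SimpleGraph.partner_mem_support hv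
    rw [level_succ_of_mem hv, level_succ_of_mem hw, SimpleGraph.partner_involutive hR v]
    have := level_le (N := N) t i v
    have := level_le (N := N) t i ((roundGraph N i).partner v)
    simp only [hv, hw, true_and]
    split_ifs <;> omega
  · simp [SimpleGraph.partner_of_notMem_support hv, level_succ_of_notMem hv, hv]

open scoped Classical in
lemma sum_card_support_le (t K : ℕ) :
    ∑ i ∈ range K, #{v | v ∈ (roundGraph N i).support} ≤
      t * Fintype.card V + ∑ i ∈ range K, #(frontier N t i) := by
  have hK : ∑ i ∈ range K, #{v | v ∈ (roundGraph N i).support} ≤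
      ∑ v, level N t K v + ∑ i ∈ range K, #(frontier N t i) := by
    induction K with
    | zero => simp
    | succ K ih =>
      rw [sum_range_succ, sum_range_succ]
      have := sum_level_add_card_support_le hN t K
      omega
  have hlevel : ∑ v, level N t K v ≤ t * Fintype.card V := by
    simpa [mul_comm] using Finset.sum_le_sum fun v (_ : v ∈ univ) => level_le (N := N) t K v
  omega

end Counting

variable {G : SimpleGraph V}

lemma exists_walk_of_le_level (hNG : ∀ i, N i ≤ G) {t : ℕ} (i : ℕ) (v : V) {j : ℕ}
    (hj : j ≤ level N t i v) : ∃ (u : V) (p : G.Walk u v) (l : List (Fin k)),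
      p.length = j ∧ IsMonotonicLabelling N p l ∧ ∀ a ∈ l, (a : ℕ) < i := by
  induction i generalizing v j with
  | zero =>
    obtain rfl : j = 0 := Nat.le_zero.1 hj
    exact ⟨v, Walk.nil, [], rfl, IsMonotonicLabelling.nil, by simp⟩
  | succ i ih =>
    have lower : ∀ {j}, j ≤ level N t i v → ∃ (u : V) (p : G.Walk u v) (l : List (Fin k)),
        p.length = j ∧ IsMonotonicLabelling N p l ∧ ∀ a ∈ l, (a : ℕ) < i + 1 := fun hj => by
      obtain ⟨u, p, l, hlen, hl, hlt⟩ := ih v hj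
      exact ⟨u, p, l, hlen, hl, fun a ha => Nat.lt_succ_of_lt (hlt a ha)⟩
    by_cases hv : v ∈ (roundGraph N i).support
    · rw [level_succ_of_mem hv] at hj
      by_cases hj' : j ≤ level N t i v
      · exact lower hj'
      set w := (roundGraph N i).partner v
      have hwv : (roundGraph N i).Adj w v := (SimpleGraph.adj_partner hv).symm
      have hik := lt_of_roundGraph_adj hwv
      obtain ⟨u, p, l, hlen, hl, hlt⟩ := ih w (j := j - 1) (by omega)
      refine ⟨u, p.concat (roundGraph_le hNG i hwv), l ++ [⟨i, hik⟩], ?_,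
        hl.concat (fun b hb => hlt b hb) _ (by rwa [roundGraph_of_lt hik] at hwv), ?_⟩
      · rw [Walk.length_concat]
        omega
      · simp only [List.mem_append, List.mem_singleton]
        rintro a (ha | rfl)
        exacts [Nat.lt_succ_of_lt (hlt a ha), Nat.lt_succ_self i]
    · rw [level_succ_of_notMem hv] at hj
      exact lower hj

lemma exists_walk_of_mem_frontier [Fintype V] (hNG : ∀ i, N i ≤ G) {t i : ℕ} (ht : 1 ≤ t)
    {v : V} (hv : v ∈ frontier N t i) : ∃ (u : V) (p : G.Walk u v),
      p.length = t ∧ IsMonotonic N p ∧ (roundGraph N i).Adj p.penultimate v := by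
  simp only [frontier, mem_filter, mem_univ, true_and] at hv
  set w := (roundGraph N i).partner v
  have hwv : (roundGraph N i).Adj w v := (SimpleGraph.adj_partner hv.1).symm
  have hik := lt_of_roundGraph_adj hwv
  obtain ⟨u, p, l, hlen, hl, hlt⟩ := exists_walk_of_le_level hNG i w hv.2
  have hwv' : (N ⟨i, hik⟩).Adj w v := by rwa [roundGraph_of_lt hik] at hwv
  refine ⟨u, p.concat (roundGraph_le hNG i hwv), ?_, ⟨_, hl.concat (fun b hb => hlt b hb) _ hwv'⟩,
    by rwa [Walk.penultimate_concat]⟩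
  rw [Walk.length_concat]
  omega

open scoped Classical in
/-- The walks ending at frontier vertices are told apart by their endpoint and the round of their
last edge. -/
lemma two_mul_sum_card_edgeFinset_le [Fintype V]
    (hN : ∀ i, ∀ ⦃v u w : V⦄, (N i).Adj v u → (N i).Adj v w → u = w)
    (hdisj : Pairwise fun i j => Disjoint (N i).edgeSet (N j).edgeSet) (hNG : ∀ i, N i ≤ G)
    {t : ℕ} (ht : 1 ≤ t) (W : Finset ((u : V) × (v : V) × G.Walk u v))
    (hW : ∀ x : (u : V) × (v : V) × G.Walk u v,
      x.2.2.length = t → IsMonotonic N x.2.2 → x ∈ W) :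
    2 * ∑ i, #(N i).edgeFinset ≤ t * Fintype.card V + #W :=
  calc 2 * ∑ i, #(N i).edgeFinset
      = ∑ i ∈ range k, #{v | v ∈ (roundGraph N i).support} := by
        rw [mul_sum, ← Fin.sum_univ_eq_sum_range (fun i => #{v | v ∈ (roundGraph N i).support})]
        refine sum_congr rfl fun i _ => ?_
        rw [roundGraph_of_lt i.2, SimpleGraph.card_support_eq_two_mul_card_edgeFinset (hN i)]
    _ ≤ t * Fintype.card V + ∑ i ∈ range k, #(frontier N t i) := sum_card_support_le hN t k
    _ = t * Fintype.card V + #((range k).sigma (frontier N t)) := by rw [card_sigma]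
    _ ≤ t * Fintype.card V + #W := by
        refine Nat.add_le_add_left (card_le_card_of_forall_subsingleton
          (r := fun y x => x.2.1 = y.2 ∧ (roundGraph N y.1).Adj x.2.2.penultimate x.2.1)
          ?_ ?_) _
        · rintro ⟨i, v⟩ hy
          obtain ⟨u, p, hlen, hmono, hadj⟩ :=
            exists_walk_of_mem_frontier hNG ht (mem_sigma.1 hy).2
          exact ⟨⟨u, v, p⟩, hW _ hlen hmono, rfl, hadj⟩
        · rintro x - ⟨i, v⟩ ⟨-, rfl, hi⟩ ⟨j, w⟩ ⟨-, hw, hj⟩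
          obtain rfl := roundGraph_eq_of_adj hdisj hi hj
          obtain rfl : x.2.1 = w := hw
          rfl

end GrahamKleitman

section MonotonicPaths

variable {V : Type*} [Fintype V] [DecidableEq V] (G : SimpleGraph V) [DecidableRel G.Adj]
  {k : ℕ} (M : Fin k → SimpleGraph V)

open scoped Classical in
noncomputable def monotonicPaths (t : ℕ) : Finset ((u : V) × (v : V) × G.Walk u v) :=
  {x ∈ univ.sigma fun u => univ.sigma fun v => G.finsetWalkLength t u v |
    x.2.2.IsPath ∧ IsMonotonic M x.2.2}

variable {G M}

lemma mem_monotonicPaths {t : ℕ} {x : (u : V) × (v : V) × G.Walk u v} :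
    x ∈ monotonicPaths G M t ↔ x.2.2.IsPath ∧ x.2.2.length = t ∧ IsMonotonic M x.2.2 := by
  simp [monotonicPaths, mem_finsetWalkLength_iff, and_left_comm]

lemma coe_monotonicPaths (t : ℕ) : (monotonicPaths G M t : Set ((u : V) × (v : V) × G.Walk u v)) =
    {x | x.2.2.IsPath ∧ x.2.2.length = t ∧ IsMonotonic M x.2.2} :=
  Set.ext fun _ => mem_monotonicPaths

lemma IsParallelGreedy.two_mul_card_le {s : ℕ} (hPG : IsParallelGreedy G s k M) {t : ℕ}
    (ht : 1 ≤ t) (hts : t ≤ s) {H : Finset (Sym2 V)} (hH : H ⊆ G.edgeFinset) :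
    2 * #H ≤ t * Fintype.card V + #{x ∈ monotonicPaths G M t | x.2.2.edges.toFinset ⊆ H} := by
  classical
  set N : Fin k → SimpleGraph V := fun i => M i ⊓ fromEdgeSet H
  have hNM : ∀ i, N i ≤ M i := fun i => inf_le_left
  have hNH : ∀ i, ∀ e ∈ (N i).edgeSet, e ∈ H := fun i e he => by
    simp only [N, edgeSet_inf, edgeSet_fromEdgeSet] at he
    exact he.2.1
  have hcover : #H ≤ ∑ i, #(N i).edgeFinset := by
    refine (card_le_card fun e he => ?_).trans card_biUnion_le
    have heG := mem_edgeFinset.1 (hH he)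
    obtain ⟨i, hi⟩ := hPG.2.1 e heG
    refine mem_biUnion.2 ⟨i, mem_univ _, mem_edgeFinset.2 ?_⟩
    simp only [N, edgeSet_inf, edgeSet_fromEdgeSet]
    exact ⟨hi, he, G.not_isDiag_of_mem_edgeSet heG⟩
  have hcount := GrahamKleitman.two_mul_sum_card_edgeFinset_le
    (fun i _ _ _ hu hw => hPG.2.2.2.1 i _ _ _ (hNM i hu) (hNM i hw))
    (fun i j hij => (hPG.2.2.1 hij).mono (edgeSet_mono (hNM i)) (edgeSet_mono (hNM j)))
    (fun i => (hNM i).trans (hPG.1 i)) ht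
    {x ∈ monotonicPaths G M t | x.2.2.edges.toFinset ⊆ H} ?_
  · calc 2 * #H ≤ 2 * ∑ i, #(N i).edgeFinset := Nat.mul_le_mul_left 2 hcover
      _ ≤ _ := by convert hcount
  intro x hlen hx
  obtain ⟨l, hl⟩ := isMonotonic_iff_exists_labelling.1 hx
  have hmono : IsMonotonic M x.2.2 := ⟨l, hl.mono hNM⟩
  refine mem_filter.2 ⟨mem_monotonicPaths.2
    ⟨hPG.isPath_of_isMonotonic hmono (hlen ▸ hts), hlen, hmono⟩, fun e he => ?_⟩
  obtain ⟨i, -, hei⟩ := hl.2.exists_of_mem_left (List.mem_toFinset.1 he)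
  exact hNH i e hei

lemma IsParallelGreedy.two_mul_mul_card_edgeFinset_le {s : ℕ} (hPG : IsParallelGreedy G s k M)
    {t : ℕ} (ht : 1 ≤ t) (hts : t ≤ s) {p : ℝ} (hp₀ : 0 ≤ p) (hp₁ : p ≤ 1) :
    2 * p * #G.edgeFinset ≤ t * Fintype.card V + p ^ t * #(monotonicPaths G M t) := by
  refine mul_mul_card_le_of_forall_subset (S := fun x => x.2.2.edges.toFinset) (fun x hx => ?_)
    (fun H hH => by exact_mod_cast hPG.two_mul_card_le ht hts hH) hp₀ hp₁
  obtain ⟨hpath, hlen, -⟩ := mem_monotonicPaths.1 hx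
  refine ⟨fun e he => mem_edgeFinset.2 (x.2.2.edges_subset_edgeSet (List.mem_toFinset.1 he)), ?_⟩
  rw [List.toFinset_card_of_nodup hpath.edges_nodup, Walk.length_edges, hlen]

end MonotonicPaths

/-- Full counting lemma: there is an absolute constant `c > 0` such that every
`s`-parallel-greedy graph `G` on `n ≥ 1` vertices (`s` even) with average degree
`d = 2m/n ≥ s` contains at least `n·(c·d/s)^(s/2)` monotonic paths with exactly
`s/2` edges. -/
theorem monotonic_path_full_counting :
    ∃ c : ℝ, 0 < c ∧
      ∀ (V : Type) [Fintype V] [DecidableEq V] (G : SimpleGraph V) [DecidableRel G.Adj]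
        (s k : ℕ) (M : Fin k → SimpleGraph V), IsParallelGreedy G s k M → 2 ≤ s → Even s →
        0 < Fintype.card V →
        (s : ℝ) ≤ 2 * G.edgeFinset.card / Fintype.card V →
        (Fintype.card V : ℝ) *
            (c * (2 * G.edgeFinset.card / Fintype.card V) / s) ^ (s / 2) ≤
          ({x : (u : V) × (v : V) × G.Walk u v |
              x.2.2.IsPath ∧ x.2.2.length = s / 2 ∧ IsMonotonic M x.2.2}.ncard : ℝ) := by
  refine ⟨1 / 2, by norm_num, ?_⟩
  intro V _ _ G _ s k M hPG hs hse hn hd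
  obtain ⟨t, rfl⟩ : ∃ t, s = 2 * t := hse.exists_two_nsmul s
  rw [Nat.mul_div_cancel_left t two_pos, ← coe_monotonicPaths, Set.ncard_coe_finset]
  set n := Fintype.card V
  set m := #G.edgeFinset
  have hn' : (0 : ℝ) < n := by exact_mod_cast hn
  have hbase : 1 / 2 * (2 * (m : ℝ) / n) / ((2 * t : ℕ) : ℝ) = m / (2 * t * n) := by
    push_cast
    field_simp
  have htn : (t : ℝ) * n ≤ m := by
    rw [le_div_iff₀ hn'] at hd
    push_cast at hd
    linarith
  rw [hbase]
  exact mul_div_pow_le_of_forall_two_mul_le hn' (by omega) htn fun p hp₀ hp₁ =>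
    hPG.two_mul_mul_card_edgeFinset_le (by omega) (by omega) hp₀ hp₁
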